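/- Uniform convergence of normalized Birkhoff averages under the transfer operator: Let f:Ω→ℝ be continuous and suppose there exist λ>0, a strictly positive continuous function h:Ω→ℝ, and a Borel probability measure ν on Ω such that for every continuous ψ:Ω→ℝ one has ‖λ^{-n} L_f^n ψ − h ∫_Ω ψ dν‖₀ → 0 as n→∞. Then for every continuous φ:Ω→ℝ, ‖(1/n)·L_f^n(S_nφ)/(L_f^n 𝟙) − ∫_Ω φ·h dν‖₀ → 0 as n→∞. -/

import Mathlib

/-!
Dividing by `λ ^ n` is the same as replacing `f` by `f - log λ`, so we may take `λ = 1`.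
Since `L^j ((g ∘ σ^j) · ψ) = g · L^j ψ`, the `j`-th term of `L^n (S_n φ)` is
`L^(n-j) (φ · L^j 𝟙)`. By positivity of `L`, this is within `‖φ‖ · sup_m ‖L^m 𝟙‖ · ‖L^j 𝟙 - h‖` of
`L^(n-j) (φ h)`, which is within `‖L^(n-j) (φ h) - h ∫ φ h dν‖` of `h ∫ φ h dν`. Both errors tend
to zero in `j` resp. `n - j`, hence so do their Cesàro means, and `(1/n) L^n (S_n φ) → h ∫ φ h dν`
uniformly. Dividing by `L^n 𝟙 → h ≥ min h > 0` gives the claim.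
-/

open MeasureTheory Filter Topology

noncomputable def dOmega {M : Type*} [MetricSpace M] (x y : ℕ → M) : ℝ :=
  ∑' n : ℕ, (1 / 2 : ℝ) ^ (n + 1) * dist (x n) (y n)

/-- The sequence `(a, x₁, x₂, …)` obtained by prepending `a` to `x`. -/
def consSeq {M : Type*} (a : M) (x : ℕ → M) : ℕ → M := fun n => Nat.casesOn n a x

/-- The left shift `σ(x₁,x₂,…) = (x₂,x₃,…)`. -/
def shift {M : Type*} (x : ℕ → M) : ℕ → M := fun n => x (n + 1)

/-- The Ruelle transfer operator with a priori measure `μ` and potential `f`. -/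
noncomputable def Ruelle {M : Type*} [MeasurableSpace M] (μ : Measure M)
    (f φ : (ℕ → M) → ℝ) : (ℕ → M) → ℝ :=
  fun x => ∫ a, Real.exp (f (consSeq a x)) * φ (consSeq a x) ∂μ

/-- The `n`-th Birkhoff sum `S_n φ = Σ_{j=0}^{n-1} φ ∘ σ^j`. -/
noncomputable def birkhoff {M : Type*} (φ : (ℕ → M) → ℝ) (n : ℕ) : (ℕ → M) → ℝ :=
  fun x => ∑ j ∈ Finset.range n, φ (shift^[j] x)

/-- `f` is `α`-Hölder with respect to the metric `dOmega`. -/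
def IsHolder {M : Type*} [MetricSpace M] (α : ℝ) (f : (ℕ → M) → ℝ) : Prop :=
  ∃ C : ℝ, 0 ≤ C ∧ ∀ x y, |f x - f y| ≤ C * dOmega x y ^ α

open Finset

section SequenceSpace

variable {M : Type*}

@[simp]
lemma shift_consSeq (a : M) (x : ℕ → M) : shift (consSeq a x) = x := rfl

variable [TopologicalSpace M]

lemma continuous_consSeq : Continuous fun p : M × (ℕ → M) => consSeq p.1 p.2 :=
  continuous_pi fun n => by
    cases n with
    | zero => exact continuous_fst
    | succ m => exact (continuous_apply m).comp continuous_snd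

lemma continuous_shift : Continuous (shift : (ℕ → M) → ℕ → M) :=
  continuous_pi fun n => continuous_apply (n + 1)

lemma continuous_ruelle_integrand {f ψ : (ℕ → M) → ℝ} (hf : Continuous f) (hψ : Continuous ψ) :
    Continuous fun p : M × (ℕ → M) => Real.exp (f (consSeq p.1 p.2)) * ψ (consSeq p.1 p.2) :=
  (Real.continuous_exp.comp (hf.comp continuous_consSeq)).mul (hψ.comp continuous_consSeq)

end SequenceSpace

section RuelleAlgebra

variable {M : Type*} [MeasurableSpace M] (μ : Measure M) (f : (ℕ → M) → ℝ)

lemma ruelle_const_mul (c : ℝ) (ψ : (ℕ → M) → ℝ) :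
    Ruelle μ f (fun x => c * ψ x) = fun x => c * Ruelle μ f ψ x := by
  funext x
  simp only [Ruelle, ← integral_const_mul, mul_left_comm c]

lemma ruelle_iterate_const_mul (c : ℝ) (ψ : (ℕ → M) → ℝ) (n : ℕ) :
    (Ruelle μ f)^[n] (fun x => c * ψ x) = fun x => c * (Ruelle μ f)^[n] ψ x := by
  induction n generalizing ψ with
  | zero => rfl
  | succ n ih => rw [Function.iterate_succ_apply, ruelle_const_mul, ih, Function.iterate_succ_apply]

lemma ruelle_comp_shift_mul (g ψ : (ℕ → M) → ℝ) :
    Ruelle μ f (fun y => g (shift y) * ψ y) = fun x => g x * Ruelle μ f ψ x := by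
  funext x
  simp only [Ruelle, ← integral_const_mul, shift_consSeq, mul_left_comm (g x)]

lemma ruelle_iterate_comp_shift_iterate_mul (g ψ : (ℕ → M) → ℝ) (n : ℕ) :
    (Ruelle μ f)^[n] (fun y => g (shift^[n] y) * ψ y) = fun x => g x * (Ruelle μ f)^[n] ψ x := by
  induction n generalizing ψ with
  | zero => rfl
  | succ n ih =>
    simp only [Function.iterate_succ_apply]
    rw [ruelle_comp_shift_mul μ f (fun z => g (shift^[n] z)), ih]

lemma ruelle_iterate_comp_shift_iterate (φ : (ℕ → M) → ℝ) {j n : ℕ} (hjn : j ≤ n) :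
    (Ruelle μ f)^[n] (fun y => φ (shift^[j] y))
      = (Ruelle μ f)^[n - j] (fun y => φ y * (Ruelle μ f)^[j] 1 y) := by
  have h := ruelle_iterate_comp_shift_iterate_mul μ f φ 1 j
  simp only [Pi.one_apply, mul_one] at h
  rw [← Nat.sub_add_cancel hjn, Function.iterate_add_apply, h, Nat.add_sub_cancel]

lemma ruelle_iterate_sub_log {lam : ℝ} (hlam : 0 < lam) (ψ : (ℕ → M) → ℝ) (n : ℕ) :
    (Ruelle μ (fun x => f x - Real.log lam))^[n] ψ
      = fun x => (lam ^ n)⁻¹ * (Ruelle μ f)^[n] ψ x := by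
  have hstep : ∀ ψ : (ℕ → M) → ℝ,
      Ruelle μ (fun x => f x - Real.log lam) ψ = fun x => lam⁻¹ * Ruelle μ f ψ x := by
    intro ψ
    funext x
    simp only [Ruelle, ← integral_const_mul, Real.exp_sub, Real.exp_log hlam, div_eq_inv_mul,
      mul_assoc]
  induction n with
  | zero => simp
  | succ n ih =>
    rw [Function.iterate_succ_apply', ih, hstep, ruelle_const_mul, Function.iterate_succ_apply']
    funext x
    ring

end RuelleAlgebra

section RuelleAnalysis

variable {M : Type*} [TopologicalSpace M] [CompactSpace M] [MeasurableSpace M]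
  [OpensMeasurableSpace M] (μ : Measure M) [IsFiniteMeasure μ] {f : (ℕ → M) → ℝ}

lemma integrable_ruelle_integrand (hf : Continuous f) {ψ : (ℕ → M) → ℝ} (hψ : Continuous ψ)
    (x : ℕ → M) : Integrable (fun a => Real.exp (f (consSeq a x)) * ψ (consSeq a x)) μ :=
  ((continuous_ruelle_integrand hf hψ).comp
    (Continuous.prodMk_left x)).integrable_of_hasCompactSupport (isClosed_tsupport _).isCompact

lemma ruelle_finset_sum (hf : Continuous f) {ι : Type*} (s : Finset ι) {F : ι → (ℕ → M) → ℝ}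
    (hF : ∀ i, Continuous (F i)) :
    Ruelle μ f (fun x => ∑ i ∈ s, F i x) = fun x => ∑ i ∈ s, Ruelle μ f (F i) x := by
  funext x
  simp only [Ruelle, Finset.mul_sum]
  exact integral_finsetSum s fun i _ => integrable_ruelle_integrand μ hf (hF i) x

lemma abs_ruelle_sub_le (hf : Continuous f) {ψ₁ ψ₂ ρ : (ℕ → M) → ℝ} (hψ₁ : Continuous ψ₁)
    (hψ₂ : Continuous ψ₂) (hρ : Continuous ρ) (hle : ∀ y, |ψ₁ y - ψ₂ y| ≤ ρ y) (x : ℕ → M) :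
    |Ruelle μ f ψ₁ x - Ruelle μ f ψ₂ x| ≤ Ruelle μ f ρ x := by
  have hint := fun {ψ} (hψ : Continuous ψ) => integrable_ruelle_integrand μ hf hψ x
  rw [Ruelle, Ruelle, ← integral_sub (hint hψ₁) (hint hψ₂), ← Real.norm_eq_abs]
  refine norm_integral_le_of_norm_le (hint hρ) (.of_forall fun a => ?_)
  rw [← mul_sub, norm_mul, Real.norm_of_nonneg (Real.exp_pos _).le, Real.norm_eq_abs]
  exact mul_le_mul_of_nonneg_left (hle _) (Real.exp_pos _).le

variable [FirstCountableTopology M]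

lemma continuous_ruelle (hf : Continuous f) {ψ : (ℕ → M) → ℝ} (hψ : Continuous ψ) :
    Continuous (Ruelle μ f ψ) := by
  have hF := continuous_ruelle_integrand hf hψ
  obtain ⟨C, hC⟩ := (isCompact_range hF.norm).bddAbove
  refine continuous_of_dominated (bound := fun _ => C)
    (fun x => (hF.comp (Continuous.prodMk_left x)).aestronglyMeasurable)
    (fun x => .of_forall fun a => hC ⟨(a, x), rfl⟩) (integrable_const C)
    (.of_forall fun a => hF.comp (Continuous.prodMk_right a))

lemma continuous_ruelle_iterate (hf : Continuous f) {ψ : (ℕ → M) → ℝ} (hψ : Continuous ψ)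
    (n : ℕ) : Continuous ((Ruelle μ f)^[n] ψ) := by
  induction n generalizing ψ with
  | zero => exact hψ
  | succ n ih => exact ih (continuous_ruelle μ hf hψ)

lemma ruelle_iterate_finset_sum (hf : Continuous f) {ι : Type*} (s : Finset ι)
    {F : ι → (ℕ → M) → ℝ} (hF : ∀ i, Continuous (F i)) (n : ℕ) :
    (Ruelle μ f)^[n] (fun x => ∑ i ∈ s, F i x) = fun x => ∑ i ∈ s, (Ruelle μ f)^[n] (F i) x := by
  induction n generalizing F with
  | zero => rfl
  | succ n ih =>
    simp only [Function.iterate_succ_apply]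
    rw [ruelle_finset_sum μ hf s hF, ih fun i => continuous_ruelle μ hf (hF i)]

lemma abs_ruelle_iterate_sub_le (hf : Continuous f) {ψ₁ ψ₂ ρ : (ℕ → M) → ℝ}
    (hψ₁ : Continuous ψ₁) (hψ₂ : Continuous ψ₂) (hρ : Continuous ρ)
    (hle : ∀ y, |ψ₁ y - ψ₂ y| ≤ ρ y) (n : ℕ) (x : ℕ → M) :
    |(Ruelle μ f)^[n] ψ₁ x - (Ruelle μ f)^[n] ψ₂ x| ≤ (Ruelle μ f)^[n] ρ x := by
  induction n generalizing ψ₁ ψ₂ ρ with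
  | zero => exact hle x
  | succ n ih =>
    exact ih (continuous_ruelle μ hf hψ₁) (continuous_ruelle μ hf hψ₂) (continuous_ruelle μ hf hρ)
      (abs_ruelle_sub_le μ hf hψ₁ hψ₂ hρ hle)

end RuelleAnalysis

section UniformConvergence

variable {ι X : Type*} {l : Filter ι} {F : ι → X → ℝ} {G : X → ℝ}

lemma tendstoUniformly_of_abs_sub_le {a : ι → ℝ} (ha : Tendsto a l (𝓝 0))
    (hle : ∀ᶠ n in l, ∀ x, |F n x - G x| ≤ a n) : TendstoUniformly F G l := by
  rw [Metric.tendstoUniformly_iff]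
  intro ε hε
  filter_upwards [hle, ha.eventually (gt_mem_nhds hε)] with n hn han x
  rw [dist_comm, Real.dist_eq]
  exact (hn x).trans_lt han

lemma TendstoUniformly.exists_abs_sub_le (hF : TendstoUniformly F G l)
    (hbdd : ∀ n, BddAbove (Set.range fun x => |F n x - G x|)) :
    ∃ a : ι → ℝ, Tendsto a l (𝓝 0) ∧ ∀ n x, |F n x - G x| ≤ a n := by
  refine ⟨fun n => ⨆ x, |F n x - G x|, ?_, fun n x => le_ciSup (hbdd n) x⟩
  rw [Metric.tendsto_nhds]
  intro ε hε
  filter_upwards [Metric.tendstoUniformly_iff.1 hF (ε / 2) (half_pos hε)] with n hn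
  have hsup : ⨆ x, |F n x - G x| ≤ ε / 2 :=
    Real.iSup_le (fun x => by rw [abs_sub_comm, ← Real.dist_eq]; exact (hn x).le) (half_pos hε).le
  rw [Real.dist_0_eq_abs, abs_of_nonneg (Real.iSup_nonneg fun x => abs_nonneg _)]
  linarith

lemma TendstoUniformly.div_of_mul_const {N D : ι → X → ℝ} {h : X → ℝ} {c m : ℝ}
    (hN : TendstoUniformly N (fun x => h x * c) l) (hD : TendstoUniformly D h l) (hm : 0 < m)
    (hhm : ∀ x, m ≤ h x) : TendstoUniformly (fun n x => N n x / D n x) (fun _ => c) l := by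
  rw [Metric.tendstoUniformly_iff]
  intro ε hε
  set δ := min (m / 2) (ε * m / (4 * (|c| + 1))) with hδ
  have hδpos : 0 < δ := lt_min (half_pos hm) (by positivity)
  filter_upwards [Metric.tendstoUniformly_iff.1 hN δ hδpos,
    Metric.tendstoUniformly_iff.1 hD δ hδpos] with n hNn hDn x
  have hNx : |N n x - h x * c| < δ := by rw [abs_sub_comm, ← Real.dist_eq]; exact hNn x
  have hDx : |h x - D n x| < δ := by rw [← Real.dist_eq]; exact hDn x
  have hDlow : m / 2 ≤ D n x := by
    have := (abs_lt.1 hDx).2; linarith [hhm x, min_le_left (m / 2) (ε * m / (4 * (|c| + 1)))]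
  have hDpos : 0 < D n x := (half_pos hm).trans_le hDlow
  have hnum : |N n x - D n x * c| ≤ δ * (1 + |c|) := by
    calc |N n x - D n x * c| = |(N n x - h x * c) + (h x - D n x) * c| := by ring_nf
      _ ≤ |N n x - h x * c| + |h x - D n x| * |c| := by rw [← abs_mul]; exact abs_add_le _ _
      _ ≤ δ * (1 + |c|) := by nlinarith [abs_nonneg c]
  rw [Real.dist_eq, abs_sub_comm, div_sub' hDpos.ne', abs_div, abs_of_pos hDpos,
    div_lt_iff₀ hDpos]
  calc |N n x - D n x * c| ≤ δ * (1 + |c|) := hnum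
    _ ≤ ε * m / (4 * (|c| + 1)) * (1 + |c|) := by gcongr; exact min_le_right _ _
    _ = ε * (m / 2) / 2 := by field_simp; ring
    _ < ε * D n x := by nlinarith

end UniformConvergence

section BirkhoffAverages

variable {M : Type*} [TopologicalSpace M] [FirstCountableTopology M] [CompactSpace M]
  [MeasurableSpace M] [OpensMeasurableSpace M] (μ : Measure M) [IsFiniteMeasure μ]
  {f φ h : (ℕ → M) → ℝ}

lemma abs_ruelle_iterate_comp_shift_iterate_sub_le (hf : Continuous f) (hφ : Continuous φ)
    (hh : Continuous h) {a b : ℕ → ℝ} {Cφ K c : ℝ} (hCφ : ∀ y, |φ y| ≤ Cφ)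
    (hK : ∀ m y, (Ruelle μ f)^[m] 1 y ≤ K)
    (ha : ∀ j y, |(Ruelle μ f)^[j] 1 y - h y| ≤ a j)
    (hb : ∀ m y, |(Ruelle μ f)^[m] (fun z => φ z * h z) y - h y * c| ≤ b m)
    {j n : ℕ} (hjn : j ≤ n) (x : ℕ → M) :
    |(Ruelle μ f)^[n] (fun y => φ (shift^[j] y)) x - h x * c| ≤ Cφ * K * a j + b (n - j) := by
  rw [ruelle_iterate_comp_shift_iterate μ f φ hjn]
  have hCφ₀ : 0 ≤ Cφ := (abs_nonneg _).trans (hCφ x)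
  have hCa : 0 ≤ Cφ * a j := mul_nonneg hCφ₀ ((abs_nonneg _).trans (ha j x))
  have hle : ∀ y, |φ y * (Ruelle μ f)^[j] 1 y - φ y * h y| ≤ Cφ * a j * (1 : (ℕ → M) → ℝ) y := by
    intro y
    rw [← mul_sub, abs_mul, Pi.one_apply, mul_one]
    exact mul_le_mul (hCφ y) (ha j y) (abs_nonneg _) hCφ₀
  have hfirst := abs_ruelle_iterate_sub_le μ hf (ψ₁ := fun y => φ y * (Ruelle μ f)^[j] 1 y)
    (ψ₂ := fun y => φ y * h y) (ρ := fun y => Cφ * a j * (1 : (ℕ → M) → ℝ) y)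
    (hφ.mul (continuous_ruelle_iterate μ hf continuous_one j)) (hφ.mul hh)
    (continuous_const.mul continuous_one) hle (n - j) x
  rw [ruelle_iterate_const_mul] at hfirst
  calc _ ≤ |(Ruelle μ f)^[n - j] (fun y => φ y * (Ruelle μ f)^[j] 1 y) x
          - (Ruelle μ f)^[n - j] (fun y => φ y * h y) x|
        + |(Ruelle μ f)^[n - j] (fun y => φ y * h y) x - h x * c| := abs_sub_le _ _ _
    _ ≤ Cφ * a j * K + b (n - j) :=
        add_le_add (hfirst.trans (mul_le_mul_of_nonneg_left (hK _ x) hCa)) (hb _ x)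
    _ = Cφ * K * a j + b (n - j) := by ring

theorem tendstoUniformly_inv_mul_ruelle_iterate_birkhoff (hf : Continuous f) (hφ : Continuous φ)
    (hh : Continuous h) {c : ℝ} (h1 : TendstoUniformly (fun n => (Ruelle μ f)^[n] 1) h atTop)
    (hφh : TendstoUniformly (fun n => (Ruelle μ f)^[n] (fun y => φ y * h y))
      (fun x => h x * c) atTop) :
    TendstoUniformly (fun (n : ℕ) x => (n : ℝ)⁻¹ * (Ruelle μ f)^[n] (birkhoff φ n) x)
      (fun x => h x * c) atTop := by
  obtain ⟨a, ha₀, ha⟩ := h1.exists_abs_sub_le fun n => (isCompact_range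
    ((continuous_ruelle_iterate μ hf continuous_one n).sub hh).abs).bddAbove
  obtain ⟨b, hb₀, hb⟩ := hφh.exists_abs_sub_le fun n => (isCompact_range
    ((continuous_ruelle_iterate μ hf (hφ.mul hh) n).sub (hh.mul continuous_const)).abs).bddAbove
  obtain ⟨Cφ, hCφ⟩ := (isCompact_range hφ.abs).bddAbove
  obtain ⟨Ch, hCh⟩ := (isCompact_range hh).bddAbove
  obtain ⟨A, hA⟩ := ha₀.bddAbove_range
  have hK : ∀ m y, (Ruelle μ f)^[m] 1 y ≤ Ch + A := fun m y => by
    linarith [(le_abs_self _).trans (ha m y), hCh ⟨y, rfl⟩, hA ⟨m, rfl⟩]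
  have he : Tendsto (fun n : ℕ => (n : ℝ)⁻¹ * ∑ j ∈ range n, (Cφ * (Ch + A) * a j + b (j + 1)))
      atTop (𝓝 0) := by
    simpa using ((ha₀.const_mul (Cφ * (Ch + A))).add (hb₀.comp (tendsto_add_atTop_nat 1))).cesaro
  refine tendstoUniformly_of_abs_sub_le he ?_
  filter_upwards [eventually_gt_atTop 0] with n hn x
  have hsum : (Ruelle μ f)^[n] (birkhoff φ n) x
      = ∑ j ∈ range n, (Ruelle μ f)^[n] (fun y => φ (shift^[j] y)) x :=
    congrFun (ruelle_iterate_finset_sum μ hf (range n)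
      (fun j => hφ.comp (continuous_shift.iterate j)) n) x
  have hn' : (0 : ℝ) < n := Nat.cast_pos.2 hn
  have hreflect : ∑ j ∈ range n, b (n - j) = ∑ j ∈ range n, b (j + 1) := by
    rw [← sum_range_reflect (fun j => b (j + 1)) n]
    exact sum_congr rfl fun j hj => by rw [show n - 1 - j + 1 = n - j by grind]
  calc |(n : ℝ)⁻¹ * (Ruelle μ f)^[n] (birkhoff φ n) x - h x * c|
      = |(n : ℝ)⁻¹ * ∑ j ∈ range n, ((Ruelle μ f)^[n] (fun y => φ (shift^[j] y)) x - h x * c)| := by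
        rw [hsum, sum_sub_distrib, sum_const, card_range, nsmul_eq_mul]
        congr 1
        field_simp
    _ = (n : ℝ)⁻¹ * |∑ j ∈ range n, ((Ruelle μ f)^[n] (fun y => φ (shift^[j] y)) x - h x * c)| := by
        rw [abs_mul, abs_of_pos (inv_pos.2 hn')]
    _ ≤ (n : ℝ)⁻¹ * ∑ j ∈ range n, (Cφ * (Ch + A) * a j + b (n - j)) := by
        gcongr
        refine (abs_sum_le_sum_abs _ _).trans (sum_le_sum fun j hj => ?_)
        exact abs_ruelle_iterate_comp_shift_iterate_sub_le μ hf hφ hh (fun y => hCφ ⟨y, rfl⟩)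
          hK ha hb (mem_range.1 hj).le x
    _ = (n : ℝ)⁻¹ * ∑ j ∈ range n, (Cφ * (Ch + A) * a j + b (j + 1)) := by
        rw [sum_add_distrib, sum_add_distrib, hreflect]

end BirkhoffAverages

theorem normalized_birkhoff_average_tendstoUniformly_general
    {M : Type*} [MetricSpace M] [CompactSpace M] [MeasurableSpace M] [BorelSpace M]
    (μ : Measure M) [IsProbabilityMeasure μ]
    (f : (ℕ → M) → ℝ) (hf : Continuous f)
    (lam : ℝ) (hlam : 0 < lam)
    (h : (ℕ → M) → ℝ) (hhc : Continuous h) (hhpos : ∀ x, 0 < h x)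
    (ν : Measure (ℕ → M)) [IsProbabilityMeasure ν]
    (hconv : ∀ ψ : (ℕ → M) → ℝ, Continuous ψ →
      TendstoUniformly
        (fun (n : ℕ) (x : ℕ → M) => (lam ^ n)⁻¹ * (Ruelle μ f)^[n] ψ x)
        (fun x => h x * ∫ y, ψ y ∂ν) atTop) :
    ∀ φ : (ℕ → M) → ℝ, Continuous φ →
      TendstoUniformly
        (fun (n : ℕ) (x : ℕ → M) =>
          (n : ℝ)⁻¹ * (Ruelle μ f)^[n] (birkhoff φ n) x / (Ruelle μ f)^[n] 1 x)
        (fun _ => ∫ y, φ y * h y ∂ν) atTop := by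
  intro φ hφ
  have hg : Continuous fun x => f x - Real.log lam := hf.sub continuous_const
  have hL := ruelle_iterate_sub_log μ f hlam
  have h1 : TendstoUniformly (fun n => (Ruelle μ (fun x => f x - Real.log lam))^[n] 1) h atTop := by
    simpa [hL] using hconv 1 continuous_one
  have hφh : TendstoUniformly
      (fun n => (Ruelle μ (fun x => f x - Real.log lam))^[n] (fun y => φ y * h y))
      (fun x => h x * ∫ y, φ y * h y ∂ν) atTop := by
    simpa only [hL] using hconv (fun y => φ y * h y) (hφ.mul hhc)
  obtain ⟨m, hm, hhm⟩ := isCompact_univ.exists_forall_le' hhc.continuousOn fun x _ => hhpos x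
  have key := (tendstoUniformly_inv_mul_ruelle_iterate_birkhoff μ hg hφ
    hhc h1 hφh).div_of_mul_const h1 hm fun x => hhm x (Set.mem_univ x)
  convert key using 3 with n x
  simp only [hL]
  rw [mul_left_comm, mul_div_mul_left _ _ (inv_ne_zero (pow_ne_zero n hlam.ne'))]

/-- Uniform convergence of normalized Birkhoff averages under the transfer operator. -/
theorem normalized_birkhoff_average_tendstoUniformly
    {M : Type*} [MetricSpace M] [CompactSpace M] [MeasurableSpace M] [BorelSpace M]
    (μ : Measure M) [IsProbabilityMeasure μ]
    (hfull : ∀ U : Set M, IsOpen U → U.Nonempty → 0 < μ U)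
    (f : (ℕ → M) → ℝ) (hf : Continuous f)
    (lam : ℝ) (hlam : 0 < lam)
    (h : (ℕ → M) → ℝ) (hhc : Continuous h) (hhpos : ∀ x, 0 < h x)
    (ν : Measure (ℕ → M)) [IsProbabilityMeasure ν]
    (hconv : ∀ ψ : (ℕ → M) → ℝ, Continuous ψ →
      TendstoUniformly
        (fun (n : ℕ) (x : ℕ → M) => (lam ^ n)⁻¹ * (Ruelle μ f)^[n] ψ x)
        (fun x => h x * ∫ y, ψ y ∂ν) atTop) :
    ∀ φ : (ℕ → M) → ℝ, Continuous φ →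
      TendstoUniformly
        (fun (n : ℕ) (x : ℕ → M) =>
          (n : ℝ)⁻¹ * (Ruelle μ f)^[n] (birkhoff φ n) x / (Ruelle μ f)^[n] 1 x)
        (fun _ => ∫ y, φ y * h y ∂ν) atTop :=
  normalized_birkhoff_average_tendstoUniformly_general μ f hf lam hlam h hhc hhpos ν hconv
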